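/- arXiv:2210.14099 — 3 statements merged into one kernel-verified Lean document; each statement's English description precedes it below -/
import Mathlib

section
/- With Alice's measurements M_x^a = (2/3)|e_{a,x}⟩⟨e_{a,x}|, Bob's measurements N_x^a = (2/3)|e*⊥_{a,x}⟩⟨e*⊥_{a,x}|, and the shared state |φ⁺⟩, the joint probability p(a,a|x,x) = ⟨φ⁺| M_x^a ⊗ N_x^a |φ⁺⟩ equals 0 for all a,x ∈ {0,1,2}; consequently the steering functional W = 3 − Σ_{a,x} p(a,a|x,x) attains its algebraic maximum value 3. -/
open Matrix Complex Finset
open scoped Kronecker ComplexOrder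

/-- Inner product on `ℂ²`. -/
noncomputable def inn (u v : Fin 2 → ℂ) : ℂ := ∑ i, (starRingEnd ℂ) (u i) * v i

/-- Rank-one operator `|v⟩⟨v|`. -/
noncomputable def outer (v : Fin 2 → ℂ) : Matrix (Fin 2) (Fin 2) ℂ :=
  Matrix.vecMulVec v (star v)

/-- The nine vectors `e_{a,x}` of the paper; first index `a`, second `x`. -/
noncomputable def e : Fin 3 → Fin 3 → Fin 2 → ℂ :=
  ![![![1, 0],
     ![0, 1],
     ![1 / (Real.sqrt 2 : ℂ), Complex.I / (Real.sqrt 2 : ℂ)]],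
    ![![1 / 2, (Real.sqrt 3 : ℂ) / 2],
     ![(Real.sqrt 3 : ℂ) / 2, Complex.I / 2],
     ![1 / (Real.sqrt 2 : ℂ), Complex.exp (7 * (Real.pi : ℂ) * Complex.I / 6) / (Real.sqrt 2 : ℂ)]],
    ![![1 / 2, -((Real.sqrt 3 : ℂ) / 2)],
     ![(Real.sqrt 3 : ℂ) / 2, -(Complex.I / 2)],
     ![1 / (Real.sqrt 2 : ℂ), Complex.exp (-(Real.pi : ℂ) * Complex.I / 6) / (Real.sqrt 2 : ℂ)]]]

/-- A unit vector orthogonal to the componentwise conjugate of `e_{a,x}`. -/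
noncomputable def eperp (a x : Fin 3) : Fin 2 → ℂ := ![-(e a x 1), e a x 0]

/-- The two-qubit maximally entangled state `|φ⁺⟩`. -/
noncomputable def phip : Fin 2 × Fin 2 → ℂ :=
  fun p => if p.1 = p.2 then (1 / (Real.sqrt 2 : ℂ)) else 0

/-- Inner product on `ℂ² ⊗ ℂ²`. -/
noncomputable def inn4 (u v : Fin 2 × Fin 2 → ℂ) : ℂ :=
  ∑ p, (starRingEnd ℂ) (u p) * v p

/-- Rank-one operator on `ℂ² ⊗ ℂ²`. -/
noncomputable def outer4 (v : Fin 2 × Fin 2 → ℂ) : Matrix (Fin 2 × Fin 2) (Fin 2 × Fin 2) ℂ :=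
  Matrix.vecMulVec v (star v)

/-- Joint probability `p(a,b|x,y)` for the ideal state and measurements. -/
noncomputable def prob (a b x y : Fin 3) : ℂ :=
  inn4 phip (((((2 : ℂ) / 3) • outer (e a x)) ⊗ₖ (((2 : ℂ) / 3) • outer (eperp b y))).mulVec phip)

/-- with the ideal state and measurements, `p(a,a|x,x) = 0` for all `a,x`,
and consequently the steering functional `W = 3 − Σ_{a,x} p(a,a|x,x)` attains the value 3. -/
theorem stmt_6 :
    (∀ a x : Fin 3, prob a a x x = 0) ∧
    (3 - ∑ a : Fin 3, ∑ x : Fin 3, prob a a x x) = 3 := by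
  have key : ∀ a x : Fin 3, prob a a x x = 0 := by
    intro a x
    simp only [prob, inn4, Fintype.sum_prod_type, Fin.sum_univ_two, Matrix.mulVec, dotProduct,
      Matrix.kroneckerMap_apply, Matrix.smul_apply, outer, Matrix.vecMulVec_apply, eperp, phip,
      Pi.star_apply, smul_eq_mul, Matrix.cons_val_zero, Matrix.cons_val_one, Matrix.head_cons,
      map_neg, RCLike.star_def]
    norm_num
    ring
  refine ⟨key, ?_⟩
  simp [key]
end

section
/- Let P be a positive definite 2×2 complex matrix, and suppose that for each x ∈ {0,1,2} there exist positive semidefinite operators Ñ_x^a (a=0,1,2) with Σ_a Ñ_x^a = 𝟙 such that P Ñ_x^a P = β_{a,x} |e*⊥_{a,x}⟩⟨e*⊥_{a,x}| with β_{a,x} > 0 for all a. Then P² = c·𝟙 for some c > 0, and hence P = √c·𝟙 (P is a positive multiple of the identity). -/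
open Matrix Complex Finset
open scoped Kronecker ComplexOrder

/-! Since the `Ñ_x^a` sum to the identity, `P² = ∑ₐ β_{a,x} |e*⊥_{a,x}⟩⟨e*⊥_{a,x}|` for every `x`.
For `x = 0` the off-diagonal entries of these projectors are real and for `x = 1` they are purely
imaginary, so the off-diagonal entry of `P²` vanishes. For `x = 2` every component of
`e*⊥_{a,2}` has modulus `1/√2`, so both diagonal entries of `P²` equal `∑ₐ β_{a,2} / 2`.
Hence `P² = c • 1`, and `P` is its unique positive semidefinite square root `√c • 1`. -/

lemma mul_self_eq_sum_mul_mul {ι R : Type*} [Fintype ι] [Semiring R] (P : R) {N : ι → R}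
    (hN : ∑ a, N a = 1) : P * P = ∑ a, P * N a * P := by
  rw [← Finset.sum_mul, ← Finset.mul_sum, hN, mul_one]

lemma Matrix.IsHermitian.eq_smul_one_of_apply_zero_one {α : Type*} [Semiring α] [StarRing α]
    {M : Matrix (Fin 2) (Fin 2) α} (hM : M.IsHermitian) (h01 : M 0 1 = 0) {c : α}
    (hdiag : ∀ i, M i i = c) : M = c • 1 := by
  ext i j
  fin_cases i <;> fin_cases j <;> simp [hdiag, h01, ← hM.apply 1 0]

lemma Matrix.PosSemidef.eq_sqrt_smul_one_of_sq_eq {n : Type*} [Fintype n] [DecidableEq n]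
    {P : Matrix n n ℂ} (hP : P.PosSemidef) {c : ℝ} (hc : 0 ≤ c) (h : P ^ 2 = (c : ℂ) • 1) :
    P = ((√c : ℝ) : ℂ) • 1 := by
  open scoped MatrixOrder in
  have hsqrt : (((√c : ℝ) : ℂ) • (1 : Matrix n n ℂ)).PosSemidef :=
    PosSemidef.one.smul (Complex.zero_le_real.mpr (Real.sqrt_nonneg c))
  refine (CFC.sq_eq_sq_iff P _ hP.nonneg hsqrt.nonneg).mp ?_
  rw [h, smul_pow, one_pow, ← Complex.ofReal_pow, Real.sq_sqrt hc]

lemma outer_apply (v : Fin 2 → ℂ) (i j : Fin 2) : outer v i j = v i * starRingEnd ℂ (v j) := rfl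

lemma outer_apply_self (v : Fin 2 → ℂ) (i : Fin 2) : outer v i i = (‖v i‖ ^ 2 : ℝ) := by
  rw [outer_apply, Complex.mul_conj, Complex.normSq_eq_norm_sq]

lemma im_outer_eperp_zero_apply_zero_one (a : Fin 3) : (outer (eperp a 0) 0 1).im = 0 := by
  fin_cases a <;> simp [outer_apply, eperp, e, map_ofNat]

lemma re_outer_eperp_one_apply_zero_one (a : Fin 3) : (outer (eperp a 1) 0 1).re = 0 := by
  fin_cases a <;> simp [outer_apply, eperp, e, map_ofNat]

lemma norm_e_two (a : Fin 3) (i : Fin 2) : ‖e a 2 i‖ = (√2)⁻¹ := by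
  fin_cases a <;> fin_cases i <;> simp [e, Complex.norm_exp]

lemma outer_eperp_two_apply_self (a : Fin 3) (i : Fin 2) : outer (eperp a 2) i i = 1 / 2 := by
  rw [outer_apply_self]
  fin_cases i <;> simp [eperp, norm_e_two]

/-- if `P ≻ 0` and for each `x` there is a POVM `{Ñ_x^a}_a` with
`P Ñ_x^a P = β_{a,x} |e*⊥_{a,x}⟩⟨e*⊥_{a,x}|`, `β_{a,x} > 0`, then `P² = c·𝟙` for some
`c > 0`, and hence `P = √c·𝟙`. -/
theorem stmt_10 (P : Matrix (Fin 2) (Fin 2) ℂ) (hP : P.PosDef)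
    (h : ∀ x : Fin 3, ∃ N : Fin 3 → Matrix (Fin 2) (Fin 2) ℂ,
      (∀ a, (N a).PosSemidef) ∧ (∑ a : Fin 3, N a = 1) ∧
      (∀ a, ∃ β : ℝ, 0 < β ∧ P * N a * P = (β : ℂ) • outer (eperp a x))) :
    ∃ c : ℝ, 0 < c ∧ P ^ 2 = (c : ℂ) • (1 : Matrix (Fin 2) (Fin 2) ℂ) ∧
      P = ((Real.sqrt c : ℝ) : ℂ) • (1 : Matrix (Fin 2) (Fin 2) ℂ) := by
  have hsq_eq_sum : ∀ x, ∃ β : Fin 3 → ℝ, (∀ a, 0 < β a) ∧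
      P ^ 2 = ∑ a, (β a : ℂ) • outer (eperp a x) := by
    intro x
    obtain ⟨N, -, hN, hPNP⟩ := h x
    choose β hβ hPNP using hPNP
    refine ⟨β, hβ, ?_⟩
    rw [sq, mul_self_eq_sum_mul_mul P hN]
    exact Finset.sum_congr rfl fun a _ => hPNP a
  obtain ⟨β, -, hβ⟩ := hsq_eq_sum 0
  obtain ⟨γ, -, hγ⟩ := hsq_eq_sum 1
  obtain ⟨δ, hδ_pos, hδ⟩ := hsq_eq_sum 2
  have h01 : (P ^ 2) 0 1 = 0 := by
    apply Complex.ext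
    · simp [hγ, Matrix.sum_apply, re_outer_eperp_one_apply_zero_one]
    · simp [hβ, Matrix.sum_apply, im_outer_eperp_zero_apply_zero_one]
  set c := (∑ a, δ a) / 2
  have hdiag : ∀ i, (P ^ 2) i i = (c : ℂ) := by
    intro i
    simp [hδ, Matrix.sum_apply, outer_eperp_two_apply_self, c, div_eq_mul_inv, Finset.sum_mul]
  have hc : 0 < c := by
    have := Finset.sum_pos (fun a _ => hδ_pos a) Finset.univ_nonempty
    positivity
  have hsq : P ^ 2 = (c : ℂ) • 1 := (hP.isHermitian.pow 2).eq_smul_one_of_apply_zero_one h01 hdiag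
  exact ⟨c, hc, hsq, hP.posSemidef.eq_sqrt_smul_one_of_sq_eq hc.le hsq⟩
end

section
/- The existence of an LHS model bounds the steering functional: if p(a,b|x,y) = Σ_λ p(λ) p(a|x,ρ_λ) p_λ(b|y) with p(λ) ≥ 0, Σ_λ p(λ)=1, Σ_b p_λ(b|y)=1, p_λ(b|y) ≥ 0, then W = 3 − Σ_{a,x} p(a,a|x,x) ≤ 3 − min_{ρ} Σ_{x=0}^{2} min_{a} p(a|x,ρ), where the minimum is over all density matrices ρ on ℂ² and p(a|x,ρ)=Tr(M_x^a ρ). -/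
open Matrix Finset
open scoped ComplexOrder

/-- an LHS model bounds the steering functional:
`W = 3 − Σ_{a,x} p(a,a|x,x) ≤ 3 − min_ρ Σ_x min_a p(a|x,ρ)`, where the minimum is over
density matrices `ρ` on `ℂ²` and `p(a|x,ρ) = Tr(M_x^a ρ)`. The lower bound `β` on
`min_ρ Σ_x min_a` is expressed via all selection functions `g : x ↦ a`. -/
theorem stmt_16 {Λ : Type*} [Fintype Λ]
    (p : Λ → ℝ) (hp : ∀ l, 0 ≤ p l) (hp1 : ∑ l, p l = 1)
    (ρ : Λ → Matrix (Fin 2) (Fin 2) ℂ)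
    (hρ : ∀ l, (ρ l).PosSemidef ∧ (ρ l).trace = 1)
    (q : Λ → Fin 3 → Fin 3 → ℝ)
    (hq : ∀ l y b, 0 ≤ q l y b) (hq1 : ∀ l y, ∑ b, q l y b = 1)
    (M : Fin 3 → Fin 3 → Matrix (Fin 2) (Fin 2) ℂ)
    (pr : Fin 3 → Fin 3 → Fin 3 → Fin 3 → ℝ)
    (hpr : ∀ a b x y, pr a b x y = ∑ l, p l * ((M x a * ρ l).trace).re * q l y b)
    (β : ℝ)
    (hβ : ∀ σ : Matrix (Fin 2) (Fin 2) ℂ, σ.PosSemidef → σ.trace = 1 →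
      ∀ g : Fin 3 → Fin 3, β ≤ ∑ x : Fin 3, ((M x (g x) * σ).trace).re) :
    3 - ∑ a : Fin 3, ∑ x : Fin 3, pr a a x x ≤ 3 - β := by
  have key : β ≤ ∑ a : Fin 3, ∑ x : Fin 3, pr a a x x := by
    have h1 : ∑ a : Fin 3, ∑ x : Fin 3, pr a a x x
        = ∑ l, p l * ∑ x : Fin 3, ∑ a : Fin 3,
            ((M x a * ρ l).trace).re * q l x a := by
      simp only [hpr, Finset.mul_sum]
      calc ∑ a : Fin 3, ∑ x : Fin 3, ∑ l, p l * ((M x a * ρ l).trace).re * q l x a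
          = ∑ a : Fin 3, ∑ l, ∑ x : Fin 3, p l * ((M x a * ρ l).trace).re * q l x a :=
            Finset.sum_congr rfl fun a _ => Finset.sum_comm
        _ = ∑ l, ∑ a : Fin 3, ∑ x : Fin 3, p l * ((M x a * ρ l).trace).re * q l x a :=
            Finset.sum_comm
        _ = ∑ l, ∑ x : Fin 3, ∑ a : Fin 3, p l * (((M x a * ρ l).trace).re * q l x a) := by
            refine Finset.sum_congr rfl fun l _ => ?_
            rw [Finset.sum_comm]
            exact Finset.sum_congr rfl fun x _ => Finset.sum_congr rfl fun a _ => by ring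
    rw [h1]
    have hS : ∀ l, β ≤ ∑ x : Fin 3, ∑ a : Fin 3, ((M x a * ρ l).trace).re * q l x a := by
      intro l
      have hex : ∀ x : Fin 3, ∃ g : Fin 3, ∀ a : Fin 3,
          ((M x g * ρ l).trace).re ≤ ((M x a * ρ l).trace).re := by
        intro x
        obtain ⟨g, -, hg⟩ := Finset.exists_min_image Finset.univ
          (fun a => ((M x a * ρ l).trace).re) ⟨0, Finset.mem_univ 0⟩
        exact ⟨g, fun a => hg a (Finset.mem_univ a)⟩
      choose g hg using hex
      calc β ≤ ∑ x : Fin 3, ((M x (g x) * ρ l).trace).re :=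
              hβ (ρ l) (hρ l).1 (hρ l).2 g
        _ = ∑ x : Fin 3, ∑ a : Fin 3, ((M x (g x) * ρ l).trace).re * q l x a := by
              refine Finset.sum_congr rfl fun x _ => ?_
              rw [← Finset.mul_sum, hq1 l x, mul_one]
        _ ≤ _ := by
              refine Finset.sum_le_sum fun x _ => Finset.sum_le_sum fun a _ => ?_
              exact mul_le_mul_of_nonneg_right (hg x a) (hq l x a)
    calc β = ∑ l, p l * β := by rw [← Finset.sum_mul, hp1, one_mul]
      _ ≤ _ := Finset.sum_le_sum fun l _ => mul_le_mul_of_nonneg_left (hS l) (hp l)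
  linarith
end
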